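/- arXiv:1109.4930 — 2 statements merged into one kernel-verified Lean document; each statement's English description precedes it below -/
import Mathlib

section
/- Suppose the metric d on X is bounded. Then d_Em is a metric on E if and only if θ = (sup d)/M ≤ 1. -/
/-- `ρ` is a metric: zero iff equal, symmetric, triangle inequality. -/
def IsMetric {α : Type*} (ρ : α → α → ℝ) : Prop :=
  (∀ x y, ρ x y = 0 ↔ x = y) ∧ (∀ x y, ρ x y = ρ y x) ∧
    ∀ x y z, ρ x z ≤ ρ x y + ρ y z

def IsCauchyWith {α : Type*} (ρ : α → α → ℝ) (S : ℕ → α) : Prop :=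
  ∀ ε : ℝ, 0 < ε → ∃ N : ℕ, ∀ m ≥ N, ∀ n ≥ N, ρ (S m) (S n) < ε

def TendsToWith {α : Type*} (ρ : α → α → ℝ) (S : ℕ → α) (l : α) : Prop :=
  ∀ ε : ℝ, 0 < ε → ∃ N : ℕ, ∀ n ≥ N, ρ (S n) l < ε

def IsCompleteWith {α : Type*} (ρ : α → α → ℝ) : Prop :=
  ∀ S : ℕ → α, IsCauchyWith ρ S → ∃ l, TendsToWith ρ S l

/-- the topology generated by the open balls of `ρ` -/
def topOf {α : Type*} (ρ : α → α → ℝ) : TopologicalSpace α :=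
  TopologicalSpace.generateFrom {s | ∃ (x : α) (ε : ℝ), s = {y | ρ x y < ε}}

/-- `sup d`, the supremum of all distances in `X` -/
noncomputable def supD (X : Type*) [MetricSpace X] : ℝ :=
  sSup {r : ℝ | ∃ x y : X, dist x y = r}

/-- The multiset distance `d_E`: enumerate `a` and `c` with multiplicity in all possible
orders; the shorter enumeration is matched against an initial part of the other, taking
the sum of the distances of matched pairs plus the notional part `M * |C(c) - C(a)|`;
`d_E` is the least such value. -/
noncomputable def dE {X : Type*} [MetricSpace X] (M : ℝ) (a c : Multiset X) : ℝ :=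
  sInf {r : ℝ | ∃ la lc : List X, (la : Multiset X) = a ∧ (lc : Multiset X) = c ∧
    r = (List.zipWith dist la lc).sum + M * |(c.card : ℝ) - (a.card : ℝ)|}

/-- `d_Em`, the mean version of `d_E` (equal to `0` on the pair of empty multisets). -/
noncomputable def dEm {X : Type*} [MetricSpace X] (M : ℝ) (a c : Multiset X) : ℝ :=
  dE M a c / (max a.card c.card : ℕ)

/-!
If `d_Em` is a metric, the triangle inequality through `{x}`, `{x, y}`, `{y}` reads
`d(x, y) ≤ M/2 + M/2`, so `sup d ≤ M`.

Conversely let `d ≤ M`. Padding multisets with a dummy point at distance `M` from every point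
turns an optimal enumeration for `d_E` into a coupling of the padded multisets whose cost is
`d_E`. Gluing optimal couplings of `a, b` and of `b, c` along `b` and reading off a matching
of `a` with `c` gives, for `|a| ≤ |c|`, the sharpened triangle inequality
`d_E(a, c) + M (|b| - |c|)⁺ ≤ d_E(a, b) + d_E(b, c)`: each element of `b` that is left
unmatched in `c` costs `M`. Dividing by `max(|b|, |c|)` and using `d_E(a, c) ≤ M |c|` gives
the triangle inequality for `d_Em`.
-/

namespace List

variable {α : Type*}

def zipPad : List α → List α → List (Option α × Option α)
  | x :: l, y :: m => (some x, some y) :: zipPad l m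
  | l, [] => l.map fun x => (some x, none)
  | [], m => m.map fun y => (none, some y)

theorem map_fst_zipPad (l m : List α) :
    (zipPad l m).map Prod.fst = l.map some ++ replicate (m.length - l.length) none := by
  fun_induction zipPad l m <;> simp_all [Function.comp_def]

theorem map_snd_zipPad (l m : List α) :
    (zipPad l m).map Prod.snd = m.map some ++ replicate (l.length - m.length) none := by
  fun_induction zipPad l m <;> simp_all [Function.comp_def]

theorem sum_zipWith_dist_nonneg [PseudoMetricSpace α] :
    ∀ l m : List α, 0 ≤ (zipWith dist l m).sum
  | [], _ | _ :: _, [] => le_rfl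
  | _ :: l, _ :: m => add_nonneg dist_nonneg (sum_zipWith_dist_nonneg l m)

theorem eq_of_sum_zipWith_dist_eq_zero [MetricSpace α] :
    ∀ {l m : List α}, l.length = m.length → (zipWith dist l m).sum = 0 → l = m
  | [], [], _, _ => rfl
  | x :: l, y :: m, hlen, hsum => by
      rw [zipWith_cons_cons, sum_cons] at hsum
      have hxy := dist_nonneg (x := x) (y := y)
      have hlm := sum_zipWith_dist_nonneg l m
      rw [dist_eq_zero.mp (by linarith : dist x y = 0),
        eq_of_sum_zipWith_dist_eq_zero (l := l) (m := m) (by simpa using hlen) (by linarith)]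

end List

namespace Multiset

variable {α : Type*}

@[simp] theorem filterMap_id_map_some (s : Multiset α) : (s.map some).filterMap id = s := by
  simp [filterMap_map]

@[simp] theorem filterMap_id_replicate_none (i : ℕ) :
    (replicate i (none : Option α)).filterMap id = 0 := by
  induction i with
  | zero => rfl
  | succ i ih => simpa [replicate_succ] using ih

theorem exists_triples_of_map_snd_eq_map_fst {α β γ : Type*} (P : Multiset (α × β))
    (R : Multiset (β × γ)) (h : P.map Prod.snd = R.map Prod.fst) :
    ∃ Q : Multiset (α × β × γ), Q.map (fun q => (q.1, q.2.1)) = P ∧ Q.map Prod.snd = R := by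
  induction P using Multiset.induction_on generalizing R with
  | empty => exact ⟨0, rfl, by simpa [eq_comm] using h⟩
  | cons p P ih =>
    rw [map_cons] at h
    obtain ⟨r, hr, hpr⟩ := mem_map.mp (h ▸ mem_cons_self p.2 _)
    obtain ⟨R, rfl⟩ := exists_cons_of_mem hr
    rw [map_cons, hpr, cons_inj_right] at h
    obtain ⟨Q, hQP, hQR⟩ := ih R h
    refine ⟨(p.1, r) ::ₘ Q, ?_, ?_⟩ <;> simp [hQP, hQR, hpr]

end Multiset

section

variable {X : Type*} [MetricSpace X] {M : ℝ}

def dECandidates (M : ℝ) (a c : Multiset X) : Set ℝ :=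
  {r : ℝ | ∃ la lc : List X, (la : Multiset X) = a ∧ (lc : Multiset X) = c ∧
    r = (List.zipWith dist la lc).sum + M * |(c.card : ℝ) - (a.card : ℝ)|}

theorem dE_eq_sInf (M : ℝ) (a c : Multiset X) : dE M a c = sInf (dECandidates M a c) := rfl

theorem dECandidates_nonempty (M : ℝ) (a c : Multiset X) : (dECandidates M a c).Nonempty :=
  ⟨_, a.toList, c.toList, a.coe_toList, c.coe_toList, rfl⟩

theorem dECandidates_finite (M : ℝ) (a c : Multiset X) : (dECandidates M a c).Finite := by
  refine ((a.toList.permutations.finite_toSet.prod c.toList.permutations.finite_toSet).image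
    fun p => (List.zipWith dist p.1 p.2).sum + M * |(c.card : ℝ) - a.card|).subset ?_
  rintro r ⟨la, lc, rfl, rfl, rfl⟩
  refine ⟨(la, lc), ⟨?_, ?_⟩, rfl⟩ <;>
    simp only [Set.mem_ofPred_eq, List.mem_permutations, ← Multiset.coe_eq_coe,
      Multiset.coe_toList]

theorem mul_abs_card_sub_le_of_mem {a c : Multiset X} {r : ℝ}
    (hr : r ∈ dECandidates M a c) : M * |(c.card : ℝ) - a.card| ≤ r := by
  obtain ⟨la, lc, -, -, rfl⟩ := hr
  linarith [List.sum_zipWith_dist_nonneg la lc]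

theorem dE_le (M : ℝ) (la lc : List X) :
    dE M (la : Multiset X) lc ≤ (List.zipWith dist la lc).sum + M * |(lc.length : ℝ) - la.length| :=
  csInf_le ⟨_, fun _ => mul_abs_card_sub_le_of_mem⟩ ⟨la, lc, rfl, rfl, rfl⟩

theorem mul_abs_card_sub_le_dE (M : ℝ) (a c : Multiset X) :
    M * |(c.card : ℝ) - a.card| ≤ dE M a c :=
  le_csInf (dECandidates_nonempty M a c) fun _ => mul_abs_card_sub_le_of_mem

theorem dE_nonneg (hM : 0 ≤ M) (a c : Multiset X) : 0 ≤ dE M a c :=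
  (by positivity : 0 ≤ M * |(c.card : ℝ) - a.card|).trans (mul_abs_card_sub_le_dE M a c)

theorem exists_dE_eq (M : ℝ) (a c : Multiset X) :
    ∃ la lc : List X, (la : Multiset X) = a ∧ (lc : Multiset X) = c ∧
      dE M a c = (List.zipWith dist la lc).sum + M * |(lc.length : ℝ) - la.length| := by
  obtain ⟨la, lc, rfl, rfl, h⟩ :=
    (dECandidates_nonempty M a c).csInf_mem (dECandidates_finite M a c)
  exact ⟨la, lc, rfl, rfl, h⟩

theorem dE_comm (M : ℝ) (a c : Multiset X) : dE M a c = dE M c a := by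
  have key : ∀ a c : Multiset X, dECandidates M a c ⊆ dECandidates M c a := by
    rintro a c r ⟨la, lc, ha, hc, rfl⟩
    exact ⟨lc, la, hc, ha, by rw [List.zipWith_comm_of_comm dist_comm, abs_sub_comm]⟩
  rw [dE_eq_sInf, dE_eq_sInf, (key a c).antisymm (key c a)]

theorem dE_zero_left (M : ℝ) (c : Multiset X) : dE M 0 c = M * c.card := by
  refine le_antisymm ?_ ?_
  · simpa using dE_le M [] c.toList
  · simpa using mul_abs_card_sub_le_dE M 0 c

theorem dE_self (hM : 0 ≤ M) (a : Multiset X) : dE M a a = 0 := by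
  refine le_antisymm ?_ (dE_nonneg hM a a)
  simpa [List.zipWith_self] using dE_le M a.toList a.toList

theorem dE_eq_zero_iff (hM : 0 < M) {a c : Multiset X} : dE M a c = 0 ↔ a = c := by
  refine ⟨fun h => ?_, fun h => h ▸ dE_self hM.le a⟩
  obtain ⟨la, lc, rfl, rfl, hla⟩ := exists_dE_eq M a c
  have hsum := List.sum_zipWith_dist_nonneg la lc
  have hgap : M * |(lc.length : ℝ) - la.length| = 0 := by
    linarith [(by positivity : 0 ≤ M * |(lc.length : ℝ) - la.length|)]
  have hlen := (mul_eq_zero.mp hgap).resolve_left hM.ne'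
  rw [abs_eq_zero, sub_eq_zero, Nat.cast_inj] at hlen
  rw [List.eq_of_sum_zipWith_dist_eq_zero hlen.symm (by linarith)]

theorem dE_cons_cons_le (M : ℝ) (x y : X) (a c : Multiset X) :
    dE M (x ::ₘ a) (y ::ₘ c) ≤ dist x y + dE M a c := by
  obtain ⟨la, lc, rfl, rfl, h⟩ := exists_dE_eq M a c
  have := dE_le M (x :: la) (y :: lc)
  simp only [← Multiset.cons_coe, List.zipWith_cons_cons, List.sum_cons, List.length_cons,
    Nat.cast_succ, add_sub_add_right_eq_sub] at this
  linarith

theorem dE_le_mul_card (hS : ∀ x y : X, dist x y ≤ M) {a c : Multiset X}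
    (h : a.card ≤ c.card) : dE M a c ≤ M * c.card := by
  induction a using Multiset.induction_on generalizing c with
  | empty => exact (dE_zero_left M c).le
  | cons x a ih =>
    rw [Multiset.card_cons] at h
    obtain ⟨y, hy⟩ := Multiset.card_pos_iff_exists_mem.mp (by omega : 0 < c.card)
    obtain ⟨c, rfl⟩ := Multiset.exists_cons_of_mem hy
    rw [Multiset.card_cons, Nat.cast_succ]
    have := ih (by simpa using h)
    linarith [dE_cons_cons_le M x y a c, hS x y]

theorem dE_map_add_le (hS : ∀ x y : X, dist x y ≤ M) (p : Multiset (X × X))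
    {a c : Multiset X} (h : a.card ≤ c.card) :
    dE M (p.map Prod.fst + a) (p.map Prod.snd + c) ≤
      (p.map fun q => dist q.1 q.2).sum + M * c.card := by
  induction p using Multiset.induction_on with
  | empty => simpa using dE_le_mul_card hS h
  | cons q p ih =>
    simp only [Multiset.map_cons, Multiset.cons_add, Multiset.sum_cons]
    linarith [dE_cons_cons_le M q.1 q.2 (p.map Prod.fst + a) (p.map Prod.snd + c)]

/-- `none` is the dummy point used for padding, at distance `M` from every point of `X`. -/
def extDist (M : ℝ) : Option X → Option X → ℝ
  | some x, some y => dist x y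
  | none, none => 0
  | _, _ => M

@[simp] theorem extDist_some_some (x y : X) : extDist M (some x) (some y) = dist x y := rfl
@[simp] theorem extDist_none_none : extDist M (none : Option X) none = 0 := rfl
@[simp] theorem extDist_some_none (x : X) : extDist M (some x) none = M := rfl
@[simp] theorem extDist_none_some (y : X) : extDist M none (some y) = M := rfl

theorem sum_extDist_zipPad (M : ℝ) (l m : List X) :
    ((List.zipPad l m).map fun q => extDist M q.1 q.2).sum =
      (List.zipWith dist l m).sum + M * |(m.length : ℝ) - l.length| := by
  fun_induction List.zipPad l m <;> simp_all [Function.comp_def] <;> ring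

theorem exists_coupling_eq_dE (M : ℝ) (a c : Multiset X) :
    ∃ (P : Multiset (Option X × Option X)) (i j : ℕ),
      P.map Prod.fst = a.map some + Multiset.replicate i none ∧
      P.map Prod.snd = c.map some + Multiset.replicate j none ∧
      (P.map fun q => extDist M q.1 q.2).sum = dE M a c := by
  obtain ⟨la, lc, rfl, rfl, h⟩ := exists_dE_eq M a c
  refine ⟨List.zipPad la lc, lc.length - la.length, la.length - lc.length, ?_, ?_, ?_⟩
  · simp [List.map_fst_zipPad, ← Multiset.coe_add, Multiset.coe_replicate]
  · simp [List.map_snd_zipPad, ← Multiset.coe_add, Multiset.coe_replicate]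
  · rw [Multiset.map_coe, Multiset.sum_coe, sum_extDist_zipPad, h]

/-- The share of a glued triple `(u, v, w)` in the matching of the `u`s with the `w`s read off
from a gluing: an unmatched real `w` pays `M`, and so does a real `v` glued to a dummy `w`. -/
def gluedCost (M : ℝ) : Option X × Option X × Option X → ℝ
  | (some x, _, some z) => dist x z
  | (none, _, some _) => M
  | (_, some _, none) => M
  | (_, none, none) => 0

theorem gluedCost_le (hM : 0 ≤ M) (hS : ∀ x y : X, dist x y ≤ 2 * M)
    (q : Option X × Option X × Option X) :
    gluedCost M q ≤ extDist M q.1 q.2.1 + extDist M q.2.1 q.2.2 := by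
  obtain ⟨_ | x, _ | y, _ | z⟩ := q <;> simp [gluedCost]
  exacts [hM, hM, by linarith [hS x z], dist_triangle x y z]

theorem exists_matching_of_triples (M : ℝ) (Q : Multiset (Option X × Option X × Option X)) :
    ∃ (p : Multiset (X × X)) (a c : Multiset X) (w : ℕ),
      (Q.map (·.1)).filterMap id = p.map Prod.fst + a ∧
      (Q.map (·.2.2)).filterMap id = p.map Prod.snd + c ∧
      ((Q.map (·.2.1)).filterMap id).card ≤ ((Q.map (·.2.2)).filterMap id).card + w ∧
      (p.map fun q => dist q.1 q.2).sum + M * (c.card + w) = (Q.map (gluedCost M)).sum := by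
  induction Q using Multiset.induction_on with
  | empty => exact ⟨0, 0, 0, 0, by simp⟩
  | cons q Q ih =>
    obtain ⟨p, a, c, w, ha, hc, hw, hcost⟩ := ih
    obtain ⟨_ | x, _ | y, _ | z⟩ := q
    case' none.none.none => refine ⟨p, a, c, w, ?_⟩
    case' none.none.some => refine ⟨p, a, z ::ₘ c, w, ?_⟩
    case' none.some.none => refine ⟨p, a, c, w + 1, ?_⟩
    case' none.some.some => refine ⟨p, a, z ::ₘ c, w, ?_⟩
    case' some.none.none => refine ⟨p, x ::ₘ a, c, w, ?_⟩
    case' some.none.some => refine ⟨(x, z) ::ₘ p, a, c, w, ?_⟩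
    case' some.some.none => refine ⟨p, x ::ₘ a, c, w + 1, ?_⟩
    case' some.some.some => refine ⟨(x, z) ::ₘ p, a, c, w, ?_⟩
    all_goals
      simp only [Multiset.map_cons, Multiset.sum_cons, gluedCost] at hcost ⊢
      refine ⟨?_, ?_, ?_, ?_⟩ <;> simp_all <;> first | omega | linear_combination hcost

theorem dE_add_le_of_triples (hM : 0 ≤ M) (hS : ∀ x y : X, dist x y ≤ M) {a b c : Multiset X}
    (Q : Multiset (Option X × Option X × Option X)) (hQa : (Q.map (·.1)).filterMap id = a)
    (hQb : (Q.map (·.2.1)).filterMap id = b) (hQc : (Q.map (·.2.2)).filterMap id = c)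
    (h : a.card ≤ c.card) :
    dE M a c + M * (b.card - c.card : ℕ) ≤
      (Q.map fun q => extDist M q.1 q.2.1 + extDist M q.2.1 q.2.2).sum := by
  obtain ⟨p, a₀, c₀, w, ha, hc, hw, hcost⟩ := exists_matching_of_triples M Q
  rw [hQa] at ha
  rw [hQb, hQc] at hw
  rw [hQc] at hc
  have hac : a₀.card ≤ c₀.card := by
    rw [ha, hc] at h
    simpa using h
  have hdE := dE_map_add_le hS p hac
  rw [← ha, ← hc] at hdE
  have hw' : ((b.card - c.card : ℕ) : ℝ) ≤ w := by exact_mod_cast Nat.sub_le_iff_le_add'.mpr hw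
  calc _ ≤ (p.map fun q => dist q.1 q.2).sum + M * c₀.card + M * w := by gcongr
    _ = (Q.map (gluedCost M)).sum := by rw [← hcost]; ring
    _ ≤ _ := Multiset.sum_map_le_sum_map _ _ fun q _ =>
      gluedCost_le hM (fun x y => (hS x y).trans (by linarith)) q

theorem dE_add_card_sub_le (hM : 0 ≤ M) (hS : ∀ x y : X, dist x y ≤ M) {a b c : Multiset X}
    (h : a.card ≤ c.card) :
    dE M a c + M * (b.card - c.card : ℕ) ≤ dE M a b + dE M b c := by
  obtain ⟨P, i, j, hP₁, hP₂, hP⟩ := exists_coupling_eq_dE M a b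
  obtain ⟨R, k, l, hR₁, hR₂, hR⟩ := exists_coupling_eq_dE M b c
  -- extra `(none, none)` pairs give both couplings the same padded copy of `b`
  obtain ⟨Q, hQP, hQR⟩ := Multiset.exists_triples_of_map_snd_eq_map_fst
    (P + Multiset.replicate k (none, none)) (R + Multiset.replicate j (none, none))
    (by simp only [Multiset.map_add, Multiset.map_replicate, hP₂, hR₁]; abel)
  have hA : (Q.map (·.1)).filterMap id = a := by
    rw [show Q.map (·.1) = (Q.map fun q => (q.1, q.2.1)).map Prod.fst by simp, hQP]
    simp [hP₁]
  have hB : (Q.map (·.2.1)).filterMap id = b := by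
    rw [show Q.map (·.2.1) = (Q.map fun q => (q.1, q.2.1)).map Prod.snd by simp, hQP]
    simp [hP₂]
  have hC : (Q.map (·.2.2)).filterMap id = c := by
    rw [show Q.map (·.2.2) = (Q.map Prod.snd).map Prod.snd by simp, hQR]
    simp [hR₂]
  have hcost : (Q.map fun q => extDist M q.1 q.2.1 + extDist M q.2.1 q.2.2).sum =
      dE M a b + dE M b c := by
    rw [Multiset.sum_map_add, ← hP, ← hR]
    congr 1
    · rw [show (Q.map fun q => extDist M q.1 q.2.1) =
        (Q.map fun q => (q.1, q.2.1)).map fun q => extDist M q.1 q.2 by simp, hQP]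
      simp
    · rw [show (Q.map fun q => extDist M q.2.1 q.2.2) =
        (Q.map Prod.snd).map fun q => extDist M q.1 q.2 by simp, hQR]
      simp
  exact hcost ▸ dE_add_le_of_triples hM hS Q hA hB hC h

theorem dEm_comm (M : ℝ) (a c : Multiset X) : dEm M a c = dEm M c a := by
  rw [dEm, dEm, dE_comm, max_comm]

theorem dEm_nonneg (hM : 0 ≤ M) (a c : Multiset X) : 0 ≤ dEm M a c :=
  div_nonneg (dE_nonneg hM a c) (Nat.cast_nonneg _)

theorem dEm_eq_zero_iff (hM : 0 < M) {a c : Multiset X} : dEm M a c = 0 ↔ a = c := by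
  rw [dEm, div_eq_zero_iff, dE_eq_zero_iff hM, Nat.cast_eq_zero, Nat.max_eq_zero_iff,
    Multiset.card_eq_zero, Multiset.card_eq_zero]
  exact ⟨fun h => h.elim id fun ⟨ha, hc⟩ => ha.trans hc.symm, Or.inl⟩

theorem dE_div_le_dEm (hM : 0 ≤ M) {a c : Multiset X} {n : ℕ} (h : max a.card c.card ≤ n) :
    dE M a c / n ≤ dEm M a c := by
  rcases Nat.eq_zero_or_pos (max a.card c.card) with h0 | hpos
  · obtain ⟨rfl, rfl⟩ : a = 0 ∧ c = 0 := by simpa using h0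
    simp [dEm, dE_self hM]
  · exact div_le_div_of_nonneg_left (dE_nonneg hM a c) (by exact_mod_cast hpos)
      (by exact_mod_cast h)

theorem dEm_triangle_of_card_le (hM : 0 ≤ M) (hS : ∀ x y : X, dist x y ≤ M)
    {a b c : Multiset X} (h : a.card ≤ c.card) : dEm M a c ≤ dEm M a b + dEm M b c := by
  rcases Nat.eq_zero_or_pos c.card with hc | hc
  · obtain ⟨rfl, rfl⟩ : a = 0 ∧ c = 0 := by simp_all
    rw [dEm, dE_self hM, zero_div]
    exact add_nonneg (dEm_nonneg hM _ _) (dEm_nonneg hM _ _)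
  set t := b.card - c.card
  have hm : max b.card c.card = c.card + t := by omega
  have hab : dE M a b / (c.card + t : ℕ) ≤ dEm M a b := dE_div_le_dEm hM (by omega)
  have hbc : dE M b c / (c.card + t : ℕ) ≤ dEm M b c := dE_div_le_dEm hM hm.le
  have hac : dE M a c ≤ M * c.card := dE_le_mul_card hS h
  have hγ : (0 : ℝ) < c.card := by exact_mod_cast hc
  have ht : (0 : ℝ) ≤ t := Nat.cast_nonneg t
  calc dEm M a c = dE M a c / c.card := by rw [dEm, max_eq_right h]
    _ ≤ (dE M a c + M * t) / (c.card + t : ℕ) := by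
        rw [div_le_div_iff₀ hγ (by positivity), Nat.cast_add]
        nlinarith [mul_le_mul_of_nonneg_right hac ht]
    _ ≤ (dE M a b + dE M b c) / (c.card + t : ℕ) := by
        exact div_le_div_of_nonneg_right (dE_add_card_sub_le hM hS h) (by positivity)
    _ ≤ dEm M a b + dEm M b c := by rw [add_div]; exact add_le_add hab hbc

theorem dEm_triangle (hM : 0 ≤ M) (hS : ∀ x y : X, dist x y ≤ M) (a b c : Multiset X) :
    dEm M a c ≤ dEm M a b + dEm M b c := by
  rcases le_total a.card c.card with h | h
  · exact dEm_triangle_of_card_le hM hS h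
  · rw [dEm_comm M a c, dEm_comm M a b, dEm_comm M b c, add_comm]
    exact dEm_triangle_of_card_le hM hS h

theorem isMetric_dEm (hM : 0 < M) (hS : ∀ x y : X, dist x y ≤ M) : IsMetric (dEm (X := X) M) :=
  ⟨fun _ _ => dEm_eq_zero_iff hM, dEm_comm M, dEm_triangle hM.le hS⟩

theorem dEm_singleton_singleton (M : ℝ) (x y : X) : dEm M {x} {y} = dist x y := by
  obtain ⟨la, lc, hla, hlc, h⟩ := exists_dE_eq M {x} {y}
  rw [Multiset.coe_eq_singleton] at hla hlc
  subst hla hlc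
  simp [dEm, h]

theorem dEm_singleton_pair (M : ℝ) (x y : X) : dEm M {x} {x, y} = M / 2 := by
  have hle := dE_le M [x] [x, y]
  have hge := mul_abs_card_sub_le_dE M ({x} : Multiset X) {x, y}
  rw [show (([x, y] : List X) : Multiset X) = {x, y} from rfl] at hle
  norm_num at hle hge
  rw [dEm, Multiset.insert_eq_cons, le_antisymm hle hge]
  norm_num

theorem dist_le_of_isMetric_dEm (h : IsMetric (dEm (X := X) M)) (x y : X) :
    dist x y ≤ M := by
  have := h.2.2 {x} {x, y} {y}
  rw [h.2.1 {x, y}, dEm_singleton_singleton, dEm_singleton_pair, Multiset.pair_comm,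
    dEm_singleton_pair] at this
  linarith

end

theorem stmt_2_general {X : Type*} [MetricSpace X] (M : ℝ) (hM : 0 < M)
    (hbdd : ∃ B : ℝ, ∀ x y : X, dist x y ≤ B) :
    IsMetric (dEm (X := X) M) ↔ supD X / M ≤ 1 := by
  obtain ⟨B, hB⟩ := hbdd
  have hbddAbove : BddAbove {r : ℝ | ∃ x y : X, dist x y = r} :=
    ⟨B, by rintro _ ⟨x, y, rfl⟩; exact hB x y⟩
  rw [div_le_one hM]
  constructor
  · intro h
    exact Real.sSup_le (by rintro _ ⟨x, y, rfl⟩; exact dist_le_of_isMetric_dEm h x y) hM.le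
  · intro h
    exact isMetric_dEm hM fun x y => (le_csSup hbddAbove ⟨x, y, rfl⟩).trans h

/-- If `d` is bounded then `d_Em` is a metric on `E` iff `(sup d)/M ≤ 1`. -/
theorem stmt_2 {X : Type*} [MetricSpace X] [Nontrivial X] (M : ℝ) (hM : 0 < M)
    (hbdd : ∃ B : ℝ, ∀ x y : X, dist x y ≤ B) :
    IsMetric (dEm (X := X) M) ↔ supD X / M ≤ 1 :=
  stmt_2_general M hM hbdd
end

section
/- Assume d is bounded with θ ≤ 2, so that d_A and d_Am are metrics on A. For any sequence (r_i e_{x_i}) in A: (i) it is Cauchy with respect to d_A if and only if it is Cauchy with respect to d_Am; (ii) it converges with respect to d_A if and only if it converges with respect to d_Am; (iii) for any l ∈ A, it has limit l with respect to d_A if and only if it has limit l with respect to d_Am. -/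
/-- The setoid on `X × ℕ` identifying all points of the form `(x, 0)`. -/
def ARel (X : Type*) : Setoid (X × ℕ) where
  r p q := p = q ∨ (p.2 = 0 ∧ q.2 = 0)
  iseqv := by
    refine ⟨fun p => Or.inl rfl, ?_, ?_⟩
    · rintro p q (rfl | h)
      · exact Or.inl rfl
      · exact Or.inr ⟨h.2, h.1⟩
    · rintro p q r (rfl | h) (rfl | h') <;> tauto

/-- The space `A`: the quotient of `X × ℕ` identifying all `(x, 0)` to one point. -/
abbrev SpaceA (X : Type*) : Type _ := Quotient (ARel X)

/-- The class `r eₓ` of `(x, r)` in `A`. -/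
def aMk {X : Type*} (x : X) (r : ℕ) : SpaceA X := Quotient.mk (ARel X) (x, r)

/-- The distinguished point `e₀` of `A`. -/
noncomputable def e0A (X : Type*) [Nonempty X] : SpaceA X :=
  aMk (Classical.arbitrary X) 0

/-- The multiplicity of a point of `A`. -/
def cardA {X : Type*} : SpaceA X → ℕ :=
  Quotient.lift (fun p => p.2) (by rintro p q (rfl | ⟨h1, h2⟩) <;> simp_all)

/-- The distance `d_A(r eₓ, t e_z) = M|t - r| + min r t * d(x,z)` on `A`. -/
noncomputable def dA {X : Type*} [MetricSpace X] (M : ℝ) : SpaceA X → SpaceA X → ℝ :=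
  Quotient.lift₂
    (fun p q => M * |(q.2 : ℝ) - (p.2 : ℝ)| + (min p.2 q.2 : ℕ) * dist p.1 q.1)
    (by rintro p q p' q' (rfl | ⟨h1, h2⟩) (rfl | ⟨h3, h4⟩) <;> simp_all)

/-- The mean distance `d_Am = d_A / max r t` on `A` (with value `0` at `(e₀, e₀)`). -/
noncomputable def dAm {X : Type*} [MetricSpace X] (M : ℝ) (u v : SpaceA X) : ℝ :=
  dA M u v / (max (cardA u) (cardA v) : ℕ)


section Aux

variable {X : Type*} [MetricSpace X] (M : ℝ)

lemma dA_mk' (x z : X) (r t : ℕ) :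
    dA M (aMk x r) (aMk z t) = M * |(t : ℝ) - (r : ℝ)| + ((min r t : ℕ) : ℝ) * dist x z :=
  rfl

lemma cardA_mk' (x : X) (r : ℕ) : cardA (aMk x r) = r := rfl

lemma dAm_mk' (x z : X) (r t : ℕ) :
    dAm M (aMk x r) (aMk z t) =
      (M * |(t : ℝ) - (r : ℝ)| + ((min r t : ℕ) : ℝ) * dist x z) / ((max r t : ℕ) : ℝ) :=
  rfl

lemma dA_nonneg' (hM : 0 < M) (u v : SpaceA X) : 0 ≤ dA M u v := by
  induction u using Quotient.inductionOn with | _ p =>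
  induction v using Quotient.inductionOn with | _ q =>
  show 0 ≤ M * |(q.2 : ℝ) - (p.2 : ℝ)| + ((min p.2 q.2 : ℕ) : ℝ) * dist p.1 q.1
  have := dist_nonneg (x := p.1) (y := q.1)
  positivity

lemma dAm_nonneg' (hM : 0 < M) (u v : SpaceA X) : 0 ≤ dAm M u v :=
  div_nonneg (dA_nonneg' M hM u v) (Nat.cast_nonneg _)

lemma dAm_le_dA' (hM : 0 < M) (u v : SpaceA X) : dAm M u v ≤ dA M u v := by
  unfold dAm
  rcases Nat.eq_zero_or_pos (max (cardA u) (cardA v)) with h | h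
  · rw [h]
    simpa using dA_nonneg' M hM u v
  · exact div_le_self (dA_nonneg' M hM u v) (by exact_mod_cast h)

lemma dA_eq_zero_of_cards (u v : SpaceA X) (h1 : cardA u = 0) (h2 : cardA v = 0) :
    dA M u v = 0 := by
  induction u using Quotient.inductionOn with | _ p =>
  induction v using Quotient.inductionOn with | _ q =>
  have hp : p.2 = 0 := h1
  have hq : q.2 = 0 := h2
  show M * |(q.2 : ℝ) - (p.2 : ℝ)| + ((min p.2 q.2 : ℕ) : ℝ) * dist p.1 q.1 = 0
  simp [hp, hq]

lemma dA_le_mul' (hM : 0 < M) (u v : SpaceA X) :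
    dA M u v ≤ ((max (cardA u) (cardA v) : ℕ) : ℝ) * dAm M u v := by
  unfold dAm
  rcases Nat.eq_zero_or_pos (max (cardA u) (cardA v)) with h | h
  · rw [h]
    have h1 : cardA u = 0 := by omega
    have h2 : cardA v = 0 := by omega
    simp [dA_eq_zero_of_cards M u v h1 h2]
  · rw [mul_comm, div_mul_cancel₀ _ (by exact_mod_cast h.ne' : ((max (cardA u) (cardA v) : ℕ) : ℝ) ≠ 0)]

/-- Key: if the mean distance is `< M/2` then the larger multiplicity is at most
twice the smaller one. -/
lemma card_le_of_dAm_lt (hM : 0 < M) (x z : X) (r t : ℕ)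
    (h : dAm M (aMk x r) (aMk z t) < M / 2) : max r t ≤ 2 * min r t := by
  rcases Nat.eq_zero_or_pos (max r t) with h0 | h0
  · omega
  · rw [dAm_mk'] at h
    have hmaxR : (0 : ℝ) < ((max r t : ℕ) : ℝ) := by exact_mod_cast h0
    have habs : |(t : ℝ) - (r : ℝ)| = ((max r t : ℕ) : ℝ) - ((min r t : ℕ) : ℝ) := by
      rcases le_total r t with hle | hle
      · rw [max_eq_right hle, min_eq_left hle, abs_of_nonneg (by exact_mod_cast sub_nonneg.mpr (by exact_mod_cast hle : (r:ℝ) ≤ t))]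
      · rw [max_eq_left hle, min_eq_right hle, abs_of_nonpos (by exact_mod_cast sub_nonpos.mpr (by exact_mod_cast hle : (t:ℝ) ≤ r))]
        ring
    rw [div_lt_iff₀ hmaxR, habs] at h
    have hd : 0 ≤ ((min r t : ℕ) : ℝ) * dist x z := by positivity
    have key : M * (((max r t : ℕ) : ℝ) - ((min r t : ℕ) : ℝ)) < M * (((max r t : ℕ) : ℝ) / 2) := by
      nlinarith
    have key2 : ((max r t : ℕ) : ℝ) - ((min r t : ℕ) : ℝ) < ((max r t : ℕ) : ℝ) / 2 :=
      lt_of_mul_lt_mul_left key hM.le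
    have : ((max r t : ℕ) : ℝ) < 2 * ((min r t : ℕ) : ℝ) := by linarith
    exact_mod_cast this.le

end Aux

/-- For `d` bounded with `(sup d)/M ≤ 2` (so that `d_A` and `d_Am` are metrics), a
sequence in `A` is Cauchy / convergent / convergent to a given limit `l` for `d_A`
iff the same holds for `d_Am`. -/
theorem stmt_11 {X : Type*} [MetricSpace X] [Nontrivial X] (M : ℝ) (hM : 0 < M)
    (hbdd : ∃ B : ℝ, ∀ x y : X, dist x y ≤ B) (htheta : supD X / M ≤ 2)
    (x : ℕ → X) (r : ℕ → ℕ) :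
    (IsCauchyWith (dA M) (fun i => aMk (x i) (r i)) ↔
      IsCauchyWith (dAm M) (fun i => aMk (x i) (r i))) ∧
    ((∃ l : SpaceA X, TendsToWith (dA M) (fun i => aMk (x i) (r i)) l) ↔
      (∃ l : SpaceA X, TendsToWith (dAm M) (fun i => aMk (x i) (r i)) l)) ∧
    (∀ l : SpaceA X, TendsToWith (dA M) (fun i => aMk (x i) (r i)) l ↔
      TendsToWith (dAm M) (fun i => aMk (x i) (r i)) l) := by
  set S : ℕ → SpaceA X := fun i => aMk (x i) (r i) with hS
  -- forward directions: dAm ≤ dA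
  have cauchy_fwd : IsCauchyWith (dA M) S → IsCauchyWith (dAm M) S := by
    intro h ε hε
    obtain ⟨N, hN⟩ := h ε hε
    exact ⟨N, fun m hm n hn => lt_of_le_of_lt (dAm_le_dA' M hM _ _) (hN m hm n hn)⟩
  have tend_fwd : ∀ l, TendsToWith (dA M) S l → TendsToWith (dAm M) S l := by
    intro l h ε hε
    obtain ⟨N, hN⟩ := h ε hε
    exact ⟨N, fun n hn => lt_of_le_of_lt (dAm_le_dA' M hM _ _) (hN n hn)⟩
  -- reverse direction for tendsto
  have tend_rev : ∀ l, TendsToWith (dAm M) S l → TendsToWith (dA M) S l := by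
    intro l
    induction l using Quotient.inductionOn with | _ p =>
    obtain ⟨z, t⟩ := p
    have hl : Quotient.mk (ARel X) (z, t) = aMk z t := rfl
    rw [hl]
    intro h
    rcases Nat.eq_zero_or_pos t with ht | ht
    · subst ht
      intro ε hε
      obtain ⟨N, hN⟩ := h (M / 2) (by linarith)
      refine ⟨N, fun n hn => ?_⟩
      have hn2 := hN n hn
      have hr : r n = 0 := by
        by_contra hr
        have h1 : 0 < r n := Nat.pos_of_ne_zero hr
        have := card_le_of_dAm_lt M hM (x n) z (r n) 0 hn2
        omega
      have : dA M (S n) (aMk z 0) = 0 := by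
        rw [hS]
        simp only [dA_mk', hr]
        simp
      rw [this]; exact hε
    · intro ε hε
      have h2t : (0 : ℝ) < 2 * t := by positivity
      obtain ⟨N, hN⟩ := h (min (M / 2) (ε / (2 * t))) (lt_min (by linarith) (by positivity))
      refine ⟨N, fun n hn => ?_⟩
      have hn2 := hN n hn
      have h1 : dAm M (S n) (aMk z t) < M / 2 := lt_of_lt_of_le hn2 (min_le_left _ _)
      have h2 : dAm M (S n) (aMk z t) < ε / (2 * t) := lt_of_lt_of_le hn2 (min_le_right _ _)
      have hmax : max (r n) t ≤ 2 * t := by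
        have := card_le_of_dAm_lt M hM (x n) z (r n) t h1
        omega
      have hmaxR : ((max (r n) t : ℕ) : ℝ) ≤ 2 * t := by exact_mod_cast hmax
      calc dA M (S n) (aMk z t)
          ≤ ((max (cardA (S n)) (cardA (aMk z t)) : ℕ) : ℝ) * dAm M (S n) (aMk z t) :=
            dA_le_mul' M hM _ _
        _ = ((max (r n) t : ℕ) : ℝ) * dAm M (S n) (aMk z t) := rfl
        _ ≤ (2 * t) * dAm M (S n) (aMk z t) :=
            mul_le_mul_of_nonneg_right hmaxR (dAm_nonneg' M hM _ _)
        _ < (2 * t) * (ε / (2 * t)) := by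
            exact mul_lt_mul_of_pos_left h2 h2t
        _ = ε := by field_simp
  -- reverse direction for Cauchy
  have cauchy_rev : IsCauchyWith (dAm M) S → IsCauchyWith (dA M) S := by
    intro h
    obtain ⟨N, hN⟩ := h (M / 2) (by linarith)
    set R : ℕ := 2 * r N + (Finset.range N).sup r with hR
    have hbound : ∀ n, r n ≤ R := by
      intro n
      rcases lt_or_ge n N with hn | hn
      · have : r n ≤ (Finset.range N).sup r := Finset.le_sup (Finset.mem_range.mpr hn)
        omega
      · have := card_le_of_dAm_lt M hM (x N) (x n) (r N) (r n) (hN N le_rfl n hn)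
        omega
    intro ε hε
    have hR1 : (0 : ℝ) < (R : ℝ) + 1 := by positivity
    obtain ⟨N', hN'⟩ := h (ε / ((R : ℝ) + 1)) (by positivity)
    refine ⟨N', fun m hm n hn => ?_⟩
    have h1 := hN' m hm n hn
    have hc : ((max (cardA (S m)) (cardA (S n)) : ℕ) : ℝ) ≤ (R : ℝ) + 1 := by
      have : max (r m) (r n) ≤ R := by
        have := hbound m; have := hbound n; omega
      have h2 : ((max (r m) (r n) : ℕ) : ℝ) ≤ (R : ℝ) := by exact_mod_cast this
      calc ((max (cardA (S m)) (cardA (S n)) : ℕ) : ℝ) = ((max (r m) (r n) : ℕ) : ℝ) := rfl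
        _ ≤ (R : ℝ) := h2
        _ ≤ (R : ℝ) + 1 := by linarith
    calc dA M (S m) (S n)
        ≤ ((max (cardA (S m)) (cardA (S n)) : ℕ) : ℝ) * dAm M (S m) (S n) := dA_le_mul' M hM _ _
      _ ≤ ((R : ℝ) + 1) * dAm M (S m) (S n) :=
          mul_le_mul_of_nonneg_right hc (dAm_nonneg' M hM _ _)
      _ < ((R : ℝ) + 1) * (ε / ((R : ℝ) + 1)) := mul_lt_mul_of_pos_left h1 hR1
      _ = ε := by field_simp
  refine ⟨⟨cauchy_fwd, cauchy_rev⟩, ?_, fun l => ⟨tend_fwd l, tend_rev l⟩⟩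
  exact ⟨fun ⟨l, hl⟩ => ⟨l, tend_fwd l hl⟩, fun ⟨l, hl⟩ => ⟨l, tend_rev l hl⟩⟩
end
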